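/- arXiv:2009.01765 — 2 statements merged into one kernel-verified Lean document; each statement's English description precedes it below -/
import Mathlib

section
/- Let A1 : D → S be an allotment that induces no negative loop, and let d ∈ D be a demand unit with A1(d) = s_j. Let A2 be the restriction of A1 to D ∖ {d} (so the occupancy of s_j decreases by one and every penalty transfer edge directed out of s_j decreases in weight, while transfer edges corresponding to d disappear). Among all loops of A2 that contain a penalty transfer edge directed out of s_j, let C_min be one of minimum cost. Then: (a) if cost(C_min) ≥ 0 (or no such loop exists), then A2 induces no negative loop; (b) if cost(C_min) < 0 and A3 is the allotment obtained from A2 by removing C_min, then A3 induces no negative loop. -/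
open Finset

/-- Cyclic successor on `Fin n`. -/
def cnext {n : ℕ} (t : Fin n) : Fin n := ⟨(t.val + 1) % n, Nat.mod_lt _ t.pos⟩

section LBDD

variable {D S : Type*} [Fintype D] [DecidableEq D] [Fintype S] [DecidableEq S]

/-- Occupancy of a service center `s` under allotment `A`: the number of demand
units assigned to `s`. -/
def occ (A : D → S) (s : S) : ℕ := (Finset.univ.filter fun d => A d = s).card

/-- Total cost of an allotment: assignment costs plus accumulated per-allotment penalties. -/
def cost (CM : D → S → ℤ) (p : S → ℕ → ℤ) (A : D → S) : ℤ :=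
  (∑ d, CM d (A d)) + ∑ s, ∑ j ∈ Finset.Icc 1 (occ A s), p s j

/-- Weight of the penalty transfer edge from `si` to `sj` under allotment `A`. -/
def wpen (p : S → ℕ → ℤ) (A : D → S) (si sj : S) : ℤ :=
  p si (occ A si + 1) - p sj (occ A sj)

/-- A loop: a cyclic sequence of `m` edges; edge `t` is directed from `vtx t` to
`vtx (cnext t)`; if `dem t = some d` it is a transfer edge moving demand unit `d`,
and if `dem t = none` it is a penalty transfer edge. -/
structure Loop (S D : Type*) where
  m : ℕ
  vtx : Fin m → S
  dem : Fin m → Option D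

/-- `L` is a loop of allotment `A`: at least two pairwise distinct service centers,
each transfer edge moves a demand unit currently assigned to its tail, the demand
units are pairwise distinct, and there is at most one penalty transfer edge
(no penalty edge: type (i), a cycle of transfer edges; one penalty edge: type (ii),
a path of transfer edges closed by a penalty transfer edge). -/
def IsLoop (A : D → S) (L : Loop S D) : Prop :=
  2 ≤ L.m ∧ Function.Injective L.vtx ∧
  (∀ t d, L.dem t = some d → A d = L.vtx t) ∧
  (∀ t t' d, L.dem t = some d → L.dem t' = some d → t = t') ∧
  (∀ t t', L.dem t = none → L.dem t' = none → t = t')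

/-- Weight of edge `t` of loop `L`. -/
def edgeWt (CM : D → S → ℤ) (p : S → ℕ → ℤ) (A : D → S) (L : Loop S D) (t : Fin L.m) : ℤ :=
  match L.dem t with
  | some d => CM d (L.vtx (cnext t)) - CM d (L.vtx t)
  | none => wpen p A (L.vtx t) (L.vtx (cnext t))

/-- Cost of a loop: the sum of the weights of its edges. -/
def loopCost (CM : D → S → ℤ) (p : S → ℕ → ℤ) (A : D → S) (L : Loop S D) : ℤ :=
  ∑ t, edgeWt CM p A L t

/-- `A` induces a negative loop. -/
def InducesNegLoop (CM : D → S → ℤ) (p : S → ℕ → ℤ) (A : D → S) : Prop :=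
  ∃ L : Loop S D, IsLoop A L ∧ loopCost CM p A L < 0

/-- Removing a loop from `A`: for each transfer edge, reassign its demand unit
from the tail to the head of the edge. -/
noncomputable def removeLoop (A : D → S) (L : Loop S D) : D → S := fun x =>
  if h : ∃ t, L.dem t = some x then L.vtx (cnext (Classical.choose h)) else A x

end LBDD

/-!
Both parts rest on one optimality certificate. Suppose the loops of an allotment `A` are
nonnegative, except that those whose penalty transfer edge leaves `sj` only cost at least some
`w ≤ 0`. Take for `μ s` the shortest-path distance to `s` in the graph of cheapest transfer edges
of `A`, from a source joined to each `s` by an edge of weight `-p s (occ A s)`; closing such a path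
by a penalty transfer edge gives a loop, so `μ` is a dual potential: reduced transfer costs are
nonnegative, and since penalties are monotone each occupancy `occ A s` minimises
`n ↦ ∑ j ≤ n, p s j + n * μ s` up to `w` at `sj`. Weak duality then gives
`cost A + w ≤ cost B` for every allotment `B`.

Loops of `A2` whose penalty transfer edge does not leave `sj` lift to loops of `A1` that are no
dearer, hence are nonnegative; those leaving `sj` become nonnegative once the deleted unit is back
at `sj`. So the certificate applies to `A2`, with `w = 0` in (a) and `w = cost Cmin` in (b). Since
removing a loop changes the cost by exactly the cost of the loop, a negative loop of `A2`, or of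
`A3` (whose cost is `cost A2 + w`), would lead to an allotment below that bound.
-/

lemma cnext_eq_finRotate {n : ℕ} (t : Fin n) : cnext t = finRotate n t := by
  cases n with
  | zero => exact t.elim0
  | succ n =>
    rw [finRotate_apply]
    ext
    simp [cnext, Fin.val_add]

lemma cnext_castSucc {n : ℕ} (i : Fin n) : cnext i.castSucc = i.succ := by
  ext
  simp [cnext, Nat.mod_eq_of_lt (Nat.succ_lt_succ i.isLt)]

lemma cnext_last (n : ℕ) : cnext (Fin.last n) = 0 := by
  ext
  simp [cnext]

lemma cnext_ne {n : ℕ} (hn : 2 ≤ n) (t : Fin n) : cnext t ≠ t := by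
  intro h
  have := congrArg Fin.val h
  simp only [cnext] at this
  rcases Nat.lt_or_ge (t.val + 1) n with h1 | h1
  · rw [Nat.mod_eq_of_lt h1] at this
    omega
  · rw [show t.val + 1 = n by omega, Nat.mod_self] at this
    omega

lemma sum_comp_cnext {M : Type*} [AddCommMonoid M] {n : ℕ} (g : Fin n → M) :
    ∑ t, g (cnext t) = ∑ t, g t := by
  simp only [cnext_eq_finRotate]
  exact Equiv.sum_comp (finRotate n) g

section Loops

variable {D S : Type*}

lemma isLoop_mk {A : D → S} {m : ℕ} {v : Fin m → S} {dem : Fin m → Option D} (hm : 2 ≤ m)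
    (hv : Function.Injective v) (htail : ∀ t x, dem t = some x → A x = v t)
    (hpen : ∀ t t', dem t = none → dem t' = none → t = t') : IsLoop A ⟨m, v, dem⟩ :=
  ⟨hm, hv, htail, fun t t' x h h' => hv ((htail t x h).symm.trans (htail t' x h')), hpen⟩

def Loop.penaltyEdges (L : Loop S D) : Finset (Fin L.m) := univ.filter fun t => L.dem t = none

lemma IsLoop.penaltyEdges_eq {A : D → S} {L : Loop S D} (hL : IsLoop A L) {t₀ : Fin L.m}
    (ht₀ : L.dem t₀ = none) : L.penaltyEdges = {t₀} := by
  ext t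
  simpa [Loop.penaltyEdges] using ⟨fun h => hL.2.2.2.2 t t₀ h ht₀, fun h => h ▸ ht₀⟩

lemma Loop.penaltyEdges_eq_empty {L : Loop S D} (h : ∀ t, L.dem t ≠ none) :
    L.penaltyEdges = ∅ := by
  simpa [Loop.penaltyEdges] using h

def Loop.transferWt (f : D → S → ℤ) (L : Loop S D) (t : Fin L.m) : ℤ :=
  match L.dem t with
  | some x => f x (L.vtx (cnext t)) - f x (L.vtx t)
  | none => 0

lemma loopCost_eq_sum_transferWt_add [Fintype D] [DecidableEq S] (CM : D → S → ℤ)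
    (p : S → ℕ → ℤ) (A : D → S) (L : Loop S D) :
    loopCost CM p A L = ∑ t, L.transferWt CM t
      + ∑ t ∈ L.penaltyEdges, wpen p A (L.vtx t) (L.vtx (cnext t)) := by
  rw [loopCost, Loop.penaltyEdges, sum_filter, ← sum_add_distrib]
  refine sum_congr rfl fun t _ => ?_
  rcases h : L.dem t with _ | x <;> simp [edgeWt, Loop.transferWt, h]

lemma Loop.sum_transferWt_const (L : Loop S D) (g : S → ℤ) :
    ∑ t, L.transferWt (fun _ => g) t
      = ∑ t ∈ L.penaltyEdges, (g (L.vtx t) - g (L.vtx (cnext t))) := by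
  have hcirc : ∑ t, (g (L.vtx (cnext t)) - g (L.vtx t)) = 0 := by
    rw [sum_sub_distrib, sum_comp_cnext (fun t => g (L.vtx t)), sub_self]
  have hsplit : ∀ t, L.transferWt (fun _ => g) t = (g (L.vtx (cnext t)) - g (L.vtx t))
      + if L.dem t = none then g (L.vtx t) - g (L.vtx (cnext t)) else 0 := by
    intro t
    rcases h : L.dem t with _ | x <;> simp [Loop.transferWt, h]
  rw [sum_congr rfl fun t _ => hsplit t, sum_add_distrib, hcirc, zero_add, Loop.penaltyEdges,
    sum_filter]

variable {A : D → S} {L : Loop S D}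

lemma IsLoop.vtx_cnext_ne (hL : IsLoop A L) (t : Fin L.m) : L.vtx (cnext t) ≠ L.vtx t :=
  fun h => cnext_ne hL.1 t (hL.2.1 h)

lemma IsLoop.removeLoop_apply [DecidableEq D] (hL : IsLoop A L) {t : Fin L.m} {x : D}
    (h : L.dem t = some x) : removeLoop A L x = L.vtx (cnext t) := by
  have hx : ∃ u, L.dem u = some x := ⟨t, h⟩
  rw [removeLoop, dif_pos hx, hL.2.2.2.1 _ _ _ (Classical.choose_spec hx) h]

lemma removeLoop_apply_of_forall [DecidableEq D] {x : D} (h : ∀ t, L.dem t ≠ some x) :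
    removeLoop A L x = A x := by
  rw [removeLoop, dif_neg (not_exists.2 h)]

lemma IsLoop.sum_removeLoop_sub [Fintype D] [DecidableEq D] (hL : IsLoop A L)
    (f : D → S → ℤ) : ∑ x, (f x (removeLoop A L x) - f x (A x)) = ∑ t, L.transferWt f t := by
  set g : D → ℤ := fun x => f x (removeLoop A L x) - f x (A x)
  have hedge : ∀ t, L.transferWt f t = ∑ x, if L.dem t = some x then g x else 0 := by
    intro t
    rcases h : L.dem t with _ | y
    · simp [Loop.transferWt, h]
    · simp [Loop.transferWt, h, g, hL.removeLoop_apply h, hL.2.2.1 t y h]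
  have hunit : ∀ x, ∑ t, (if L.dem t = some x then g x else 0) = g x := by
    intro x
    by_cases hx : ∃ t, L.dem t = some x
    · obtain ⟨t₀, ht₀⟩ := hx
      rw [sum_eq_single t₀ (fun t _ ht => if_neg fun h => ht (hL.2.2.2.1 t t₀ x h ht₀))
        (by simp), if_pos ht₀]
    · push Not at hx
      simp [hx, g, removeLoop_apply_of_forall hx]
  simp_rw [hedge]
  rw [sum_comm]
  exact sum_congr rfl fun x _ => (hunit x).symm

lemma occ_eq_sum [Fintype D] [DecidableEq S] (A : D → S) (s : S) :
    (occ A s : ℤ) = ∑ x, if A x = s then 1 else 0 := by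
  rw [occ, natCast_card_filter]

lemma IsLoop.occ_removeLoop [Fintype D] [DecidableEq D] [DecidableEq S] (hL : IsLoop A L)
    (s : S) : (occ (removeLoop A L) s : ℤ) = occ A s
      + ∑ t ∈ L.penaltyEdges,
          ((if L.vtx t = s then 1 else 0) - (if L.vtx (cnext t) = s then 1 else 0)) := by
  rw [← L.sum_transferWt_const (fun s' => if s' = s then 1 else 0),
    ← hL.sum_removeLoop_sub (fun _ s' => if s' = s then 1 else 0), occ_eq_sum, occ_eq_sum,
    sum_sub_distrib]
  ring

lemma sum_penalty_of_move [Fintype S] [DecidableEq S] (p : S → ℕ → ℤ) {o o' : S → ℕ} {u v : S}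
    (huv : u ≠ v)
    (h : ∀ s, (o' s : ℤ) = o s + ((if u = s then 1 else 0) - (if v = s then 1 else 0))) :
    ∑ s, ∑ j ∈ Icc 1 (o' s), p s j
      = ∑ s, ∑ j ∈ Icc 1 (o s), p s j + (p u (o u + 1) - p v (o v)) := by
  have hu : o' u = o u + 1 := by
    have := h u
    simp [huv.symm] at this
    omega
  have hv : o v = o' v + 1 := by
    have := h v
    simp [huv] at this
    omega
  have hdiff : ∀ s, ∑ j ∈ Icc 1 (o' s), p s j - ∑ j ∈ Icc 1 (o s), p s j
      = (if u = s then p u (o u + 1) else 0) - (if v = s then p v (o v) else 0) := by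
    intro s
    by_cases hsu : u = s
    · subst hsu
      rw [hu, sum_Icc_succ_top (by omega)]
      simp [huv.symm]
    by_cases hsv : v = s
    · subst hsv
      rw [hv, sum_Icc_succ_top (by omega)]
      simp [hsu]
    have := h s
    simp only [hsu, hsv, if_false, sub_zero, add_zero, Nat.cast_inj] at this
    simp [this, hsu, hsv]
  have := sum_congr rfl fun s (_ : s ∈ univ) => hdiff s
  rw [sum_sub_distrib, sum_sub_distrib, sum_ite_eq, sum_ite_eq] at this
  simp only [mem_univ, if_true] at this
  linarith

theorem IsLoop.cost_removeLoop [Fintype D] [DecidableEq D] [Fintype S] [DecidableEq S]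
    (hL : IsLoop A L) (CM : D → S → ℤ) (p : S → ℕ → ℤ) :
    cost CM p (removeLoop A L) = cost CM p A + loopCost CM p A L := by
  have hpen : ∑ s, ∑ j ∈ Icc 1 (occ (removeLoop A L) s), p s j
      = ∑ s, ∑ j ∈ Icc 1 (occ A s), p s j
        + ∑ t ∈ L.penaltyEdges, wpen p A (L.vtx t) (L.vtx (cnext t)) := by
    by_cases h : ∃ t₀, L.dem t₀ = none
    · obtain ⟨t₀, ht₀⟩ := h
      rw [hL.penaltyEdges_eq ht₀, sum_singleton]
      refine sum_penalty_of_move p (hL.vtx_cnext_ne t₀).symm fun s => ?_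
      rw [hL.occ_removeLoop s, hL.penaltyEdges_eq ht₀, sum_singleton]
    · push Not at h
      have hocc : ∀ s, occ (removeLoop A L) s = occ A s := fun s => by
        simpa [Loop.penaltyEdges_eq_empty h] using hL.occ_removeLoop s
      simp [Loop.penaltyEdges_eq_empty h, hocc]
  rw [cost, cost, loopCost_eq_sum_transferWt_add, ← hL.sum_removeLoop_sub CM, sum_sub_distrib,
    hpen]
  ring

end Loops

section Renaming

variable {D D' S : Type*}

def Loop.mapDem (f : D' → D) (L : Loop S D') : Loop S D := ⟨L.m, L.vtx, fun t => (L.dem t).map f⟩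

lemma IsLoop.mapDem {A : D → S} {f : D' → D} {L : Loop S D'}
    (hL : IsLoop (fun x => A (f x)) L) : IsLoop A (L.mapDem f) := by
  refine isLoop_mk hL.1 hL.2.1 (fun t y h => ?_) fun t t' h h' => ?_
  · obtain ⟨x, hx, rfl⟩ := Option.map_eq_some_iff.1 h
    exact hL.2.2.1 t x hx
  · exact hL.2.2.2.2 t t' (Option.map_eq_none_iff.1 h) (Option.map_eq_none_iff.1 h')

variable [Fintype D] [Fintype D'] [DecidableEq S]

lemma occ_comp_le {f : D' → D} (hf : Function.Injective f) (A : D → S) (s : S) :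
    occ (fun x => A (f x)) s ≤ occ A s :=
  card_le_card_of_injOn f (fun x hx => by simpa using hx) hf.injOn

lemma loopCost_mapDem (CM : D → S → ℤ) (p : S → ℕ → ℤ) (A : D → S) (f : D' → D)
    (L : Loop S D') :
    loopCost CM p A (L.mapDem f) = loopCost (fun x s => CM (f x) s) p (fun x => A (f x)) L
      + ∑ t ∈ L.penaltyEdges, (wpen p A (L.vtx t) (L.vtx (cnext t))
          - wpen p (fun x => A (f x)) (L.vtx t) (L.vtx (cnext t))) := by
  rw [loopCost, loopCost, Loop.penaltyEdges, sum_filter, ← sum_add_distrib]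
  refine sum_congr rfl fun t _ => ?_
  rcases h : L.dem t with _ | x <;> simp [edgeWt, Loop.mapDem, h]

lemma loopCost_mapDem_of_forall (CM : D → S → ℤ) (p : S → ℕ → ℤ) (A : D → S) (f : D' → D)
    {L : Loop S D'} (h : ∀ t, L.dem t ≠ none) :
    loopCost CM p A (L.mapDem f) = loopCost (fun x s => CM (f x) s) p (fun x => A (f x)) L := by
  simp [loopCost_mapDem, Loop.penaltyEdges_eq_empty h]

/-- Renaming can only add units at the head of the penalty transfer edge, which, `p` being
monotone, does not make the loop dearer. -/
lemma loopCost_mapDem_le (CM : D → S → ℤ) {p : S → ℕ → ℤ} (hp : ∀ s, Monotone (p s))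
    (A : D → S) {f : D' → D} (hf : Function.Injective f) {L : Loop S D'}
    (hL : IsLoop (fun x => A (f x)) L) {t₀ : Fin L.m} (ht₀ : L.dem t₀ = none) :
    loopCost CM p A (L.mapDem f) ≤ loopCost (fun x s => CM (f x) s) p (fun x => A (f x)) L
      + (p (L.vtx t₀) (occ A (L.vtx t₀) + 1)
          - p (L.vtx t₀) (occ (fun x => A (f x)) (L.vtx t₀) + 1)) := by
  rw [loopCost_mapDem, hL.penaltyEdges_eq ht₀, sum_singleton, wpen, wpen]
  have := hp (L.vtx (cnext t₀)) (occ_comp_le hf A (L.vtx (cnext t₀)))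
  linarith

end Renaming

section ShortestPaths

variable {V : Type*} (W : V → V → ℤ)

def chainWt : List V → ℤ
  | a :: b :: l => W a b + chainWt (b :: l)
  | _ => 0

lemma chainWt_append_cons (l₁ l₂ : List V) (s : V) :
    chainWt W (l₁ ++ s :: l₂) = chainWt W (l₁ ++ [s]) + chainWt W (s :: l₂) := by
  induction l₁ with
  | nil => simp [chainWt]
  | cons a l₁ ih => cases l₁ <;> simp_all [chainWt, add_assoc]

lemma chainWt_concat {l : List V} (hl : l ≠ []) (s : V) :
    chainWt W (l ++ [s]) = chainWt W l + W (l.getLast hl) s := by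
  obtain ⟨l', b, rfl⟩ := (List.eq_nil_or_concat' l).resolve_left hl
  rw [List.append_assoc, List.singleton_append, chainWt_append_cons, List.getLast_concat]
  simp [chainWt]

lemma chainWt_cons_eq_sum (a : V) (l : List V) :
    chainWt W (a :: l) = ∑ i : Fin l.length, W (a :: l)[i.castSucc] (a :: l)[i.succ] := by
  induction l generalizing a with
  | nil => simp [chainWt]
  | cons b l ih =>
    rw [chainWt, ih]
    erw [Fin.sum_univ_succ]
    simp

variable (r : V → ℤ) (O : Set V)

def IsPathTo (P : List V) (s : V) : Prop := (P ++ [s]).Nodup ∧ ∀ v ∈ P, v ∈ O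

/-- Weight of the path `P ++ [s]`, entered from a source through an edge of weight `r`. -/
def pathWt (P : List V) (s : V) : ℤ := r (P.headD s) + chainWt W (P ++ [s])

noncomputable def shortestPathWt (s : V) : ℤ := ⨅ P : {P // IsPathTo O P s}, pathWt W r P.1 s

lemma pathWt_concat (P : List V) (s s' : V) :
    pathWt W r (P ++ [s]) s' = pathWt W r P s + W s s' := by
  rw [pathWt, pathWt, chainWt_concat W (by simp) s', List.getLast_concat]
  cases P <;> simp [add_assoc]

lemma pathWt_eq_of_eq_append {P Q R : List V} {s s' : V} (h : P ++ [s] = Q ++ s' :: R) :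
    pathWt W r P s = pathWt W r Q s' + chainWt W (s' :: R) := by
  have hhead : P.headD s = Q.headD s' := by
    have := congrArg (List.headD · s) h
    cases P <;> cases Q <;> simp_all
  rw [pathWt, pathWt, h, chainWt_append_cons, hhead, add_assoc]

variable [Finite V]

instance IsPathTo.finite (s : V) : Finite {P // IsPathTo O P s} :=
  have := Fintype.ofFinite V
  have := Classical.decEq V
  Finite.of_injective (fun P => (⟨P.1, (List.nodup_append.1 P.2.1).1⟩ : {l : List V // l.Nodup}))
    fun _ _ h => Subtype.ext (Subtype.mk.inj h)

lemma shortestPathWt_le {P : List V} {s : V} (hP : IsPathTo O P s) :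
    shortestPathWt W r O s ≤ pathWt W r P s :=
  ciInf_le (Set.finite_range _).bddBelow (⟨P, hP⟩ : {P // IsPathTo O P s})

lemma shortestPathWt_le_self (s : V) : shortestPathWt W r O s ≤ r s := by
  simpa [pathWt, chainWt] using shortestPathWt_le W r O (P := []) (s := s) ⟨by simp, by simp⟩

lemma exists_shortestPathWt_eq (s : V) :
    ∃ P, IsPathTo O P s ∧ shortestPathWt W r O s = pathWt W r P s := by
  have : Nonempty {P // IsPathTo O P s} := ⟨⟨[], by simp, by simp⟩⟩
  obtain ⟨P, hP⟩ :=
    exists_eq_ciInf_of_finite (f := fun P : {P // IsPathTo O P s} => pathWt W r P.1 s)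
  exact ⟨P.1, P.2, hP.symm⟩

/-- A shortest path to `s` either extends to `s'`, or already passes through `s'` and its part
after `s'` closes up to a cycle. -/
theorem shortestPathWt_le_add
    (hcyc : ∀ a l, (a :: l).Nodup → (∀ v ∈ a :: l, v ∈ O) → 0 ≤ chainWt W (a :: l ++ [a]))
    {s : V} (hs : s ∈ O) (s' : V) :
    shortestPathWt W r O s' ≤ shortestPathWt W r O s + W s s' := by
  obtain ⟨P, ⟨hnd, hPO⟩, hP⟩ := exists_shortestPathWt_eq W r O s
  have hO : ∀ v ∈ P ++ [s], v ∈ O := by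
    intro v hv
    rcases List.mem_append.1 hv with hv | hv
    · exact hPO v hv
    · exact (List.mem_singleton.1 hv) ▸ hs
  rw [hP]
  by_cases hmem : s' ∈ P ++ [s]
  · obtain ⟨Q, R, hQR⟩ := List.append_of_mem hmem
    rw [hQR] at hnd hO
    have hQ : IsPathTo O Q s' :=
      ⟨hnd.sublist (by simp), fun v hv => hO v (by simp [hv])⟩
    have hlast : (s' :: R).getLast (List.cons_ne_nil _ _) = s := by
      have := congrArg List.getLast? hQR
      rw [List.getLast?_concat, List.getLast?_append_of_ne_nil _ (List.cons_ne_nil _ _),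
        List.getLast?_eq_some_getLast (List.cons_ne_nil _ _)] at this
      exact (Option.some_inj.1 this).symm
    have hcycle := hcyc s' R (hnd.sublist (by simp)) fun v hv => hO v (by simp_all)
    rw [chainWt_concat W (List.cons_ne_nil _ _), hlast] at hcycle
    have := shortestPathWt_le W r O hQ
    rw [pathWt_eq_of_eq_append W r hQR]
    linarith
  · have hP' : IsPathTo O (P ++ [s]) s' :=
      ⟨List.nodup_append.2 ⟨hnd, List.nodup_singleton s', fun a ha b hb hab =>
        hmem (List.mem_singleton.1 hb ▸ hab ▸ ha)⟩, hO⟩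
    simpa only [pathWt_concat] using shortestPathWt_le W r O hP'

end ShortestPaths

section CheapestTransfers

variable {D S : Type*} (CM : D → S → ℤ) (A : D → S)

/-- Weight of the cheapest transfer edge from `s` to `s'` (junk `0` if no unit is at `s`). -/
noncomputable def minTransferWt (s s' : S) : ℤ := ⨅ x : {x // A x = s}, CM x s' - CM x s

variable [Finite D]

lemma minTransferWt_le (x : D) (s' : S) : minTransferWt CM A (A x) s' ≤ CM x s' - CM x (A x) :=
  ciInf_le (Set.finite_range _).bddBelow (⟨x, rfl⟩ : {y // A y = A x})

lemma exists_minTransferWt_eq {s : S} (hs : s ∈ Set.range A) (s' : S) :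
    ∃ x, A x = s ∧ minTransferWt CM A s s' = CM x s' - CM x s := by
  obtain ⟨x, hx⟩ := hs
  have : Nonempty {x // A x = s} := ⟨⟨x, hx⟩⟩
  obtain ⟨y, hy⟩ := exists_eq_ciInf_of_finite (f := fun y : {y // A y = s} => CM y s' - CM y s)
  exact ⟨y, y.2, hy.symm⟩

lemma minTransferWt_self {s : S} (hs : s ∈ Set.range A) : minTransferWt CM A s s = 0 := by
  obtain ⟨x, -, hx⟩ := exists_minTransferWt_eq CM A hs s
  rw [hx, sub_self]

end CheapestTransfers

section LoopsOfWalks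

variable {D S : Type*} (CM : D → S → ℤ) (A : D → S) [Fintype D] [DecidableEq S] (p : S → ℕ → ℤ)

lemma exists_loop_of_cycle {a : S} {l : List S} (hl : l ≠ []) (hnd : (a :: l).Nodup)
    (hO : ∀ v ∈ a :: l, v ∈ Set.range A) :
    ∃ L : Loop S D, IsLoop A L ∧ (∀ t, L.dem t ≠ none) ∧
      loopCost CM p A L = chainWt (minTransferWt CM A) (a :: l ++ [a]) := by
  have hunit : ∀ i : Fin (l.length + 1), ∃ x, A x = (a :: l)[i] ∧
      minTransferWt CM A (a :: l)[i] (a :: l)[cnext i]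
        = CM x (a :: l)[cnext i] - CM x (a :: l)[i] :=
    fun i => exists_minTransferWt_eq CM A (hO _ (List.getElem_mem _)) _
  choose u hu hcost using hunit
  refine ⟨⟨l.length + 1, fun i => (a :: l)[i], fun i => some (u i)⟩,
    isLoop_mk (by simpa [Nat.one_le_iff_ne_zero] using hl) (List.nodup_iff_injective_get.1 hnd)
      (fun t x h => Option.some_inj.1 h ▸ hu t) (by simp), by simp, ?_⟩
  have hedge : ∀ i, (CM (u i) (a :: l)[cnext i] - CM (u i) (a :: l)[i])
      = minTransferWt CM A (a :: l)[i] (a :: l)[cnext i] := fun i => (hcost i).symm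
  rw [loopCost, chainWt_concat _ (List.cons_ne_nil a l), List.getLast_eq_getElem,
    chainWt_cons_eq_sum]
  simp only [edgeWt, hedge]
  rw [Fin.sum_univ_castSucc]
  simp [cnext_castSucc, cnext_last]

lemma exists_loop_of_path {a s : S} {l : List S} (hnd : (a :: (l ++ [s])).Nodup)
    (hO : ∀ v ∈ a :: l, v ∈ Set.range A) :
    ∃ L : Loop S D, IsLoop A L ∧ (∃ t, L.dem t = none ∧ L.vtx t = s) ∧
      loopCost CM p A L = chainWt (minTransferWt CM A) (a :: (l ++ [s])) + wpen p A s a := by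
  set vs := a :: (l ++ [s])
  have hunit : ∀ i : Fin (l ++ [s]).length, ∃ x, A x = vs[i.castSucc] ∧
      minTransferWt CM A vs[i.castSucc] vs[i.succ] = CM x vs[i.succ] - CM x vs[i.castSucc] := by
    refine fun i => exists_minTransferWt_eq CM A (hO _ ?_) _
    have hi : (i : ℕ) < (a :: l).length := by simpa using i.2
    have : vs[i.castSucc] = (a :: l)[(i : ℕ)] := by
      simp only [vs, Fin.getElem_fin, Fin.val_castSucc, ← List.cons_append]
      exact List.getElem_append_left hi
    exact this ▸ List.getElem_mem hi
  choose u hu hcost using hunit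
  let dem : Fin vs.length → Option D := Fin.lastCases none fun i => some (u i)
  refine ⟨⟨vs.length, fun i => vs[i], dem⟩, isLoop_mk (by simp [vs])
    (List.nodup_iff_injective_get.1 hnd) (fun t x h => ?_) (fun t t' h h' => ?_),
    ⟨Fin.last _, by simp [dem], by simp [vs]⟩, ?_⟩
  · induction t using Fin.lastCases with
    | last => simp [dem] at h
    | cast i => exact (Option.some_inj.1 (by simpa [dem] using h)) ▸ hu i
  · induction t using Fin.lastCases with
    | last => induction t' using Fin.lastCases with
      | last => rfl
      | cast i => simp [dem] at h'
    | cast i => simp [dem] at h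
  · rw [loopCost, chainWt_cons_eq_sum]
    erw [Fin.sum_univ_castSucc]
    congr 1
    · refine sum_congr rfl fun i _ => ?_
      simp only [edgeWt, dem, Fin.lastCases_castSucc, cnext_castSucc]
      exact (hcost i).symm
    · simp [edgeWt, dem, cnext_last, vs]

end LoopsOfWalks

section Duality

/-- Partial sums of a monotone sequence are least where the sequence changes sign. -/
lemma sum_Icc_add_le_sum_Icc {g : ℕ → ℤ} (hg : Monotone g) {m : ℕ} {w : ℤ} (hw : w ≤ 0)
    (h₀ : g m ≤ 0) (h₁ : w ≤ g (m + 1)) (h₂ : 0 ≤ g (m + 2)) (n : ℕ) :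
    ∑ j ∈ Icc 1 m, g j + w ≤ ∑ j ∈ Icc 1 n, g j := by
  have hIcc : ∀ k, Icc 1 k = Ioc 0 k := Finset.Icc_succ_left_eq_Ioc 0
  rw [hIcc, hIcc]
  rcases le_or_gt n m with hnm | hmn
  · rw [← sum_Ioc_consecutive g (Nat.zero_le n) hnm]
    have : ∑ j ∈ Ioc n m, g j ≤ 0 := sum_nonpos fun j hj => (hg (mem_Ioc.1 hj).2).trans h₀
    linarith
  · rw [← sum_Ioc_consecutive g (Nat.zero_le m) hmn.le,
      ← sum_Ioc_consecutive g (Nat.le_succ m) hmn, Nat.Ioc_succ_singleton, sum_singleton]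
    have : 0 ≤ ∑ j ∈ Ioc (m + 1) n, g j :=
      sum_nonneg fun j hj => h₂.trans (hg (by have := (mem_Ioc.1 hj).1; omega))
    linarith

variable {D S : Type*} [Fintype D] [DecidableEq S]

lemma sum_comp_eq_sum_occ_mul [Fintype S] (C : D → S) (g : S → ℤ) :
    ∑ x, g (C x) = ∑ s, (occ C s : ℤ) * g s := by
  rw [← sum_fiberwise univ C fun x => g (C x)]
  refine sum_congr rfl fun s _ => ?_
  rw [sum_congr rfl fun x hx => by rw [(mem_filter.1 hx).2], sum_const, occ, nsmul_eq_mul]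

/-- Weak duality for allotments. -/
theorem cost_add_sum_le_cost [Fintype S] (CM : D → S → ℤ) (p : S → ℕ → ℤ) {A : D → S}
    (μ δ : S → ℤ) (hred : ∀ x s, μ s - μ (A x) ≤ CM x s - CM x (A x))
    (hpen : ∀ s n, ∑ j ∈ Icc 1 (occ A s), p s j + occ A s * μ s + δ s
      ≤ ∑ j ∈ Icc 1 n, p s j + n * μ s)
    (B : D → S) : cost CM p A + ∑ s, δ s ≤ cost CM p B := by
  have h₁ : ∑ x, (μ (B x) - μ (A x)) ≤ ∑ x, (CM x (B x) - CM x (A x)) :=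
    sum_le_sum fun x _ => hred x (B x)
  have h₂ := sum_le_sum fun s (_ : s ∈ univ) => hpen s (occ B s)
  rw [sum_sub_distrib, sum_sub_distrib, sum_comp_eq_sum_occ_mul B μ,
    sum_comp_eq_sum_occ_mul A μ] at h₁
  simp only [sum_add_distrib] at h₂
  rw [cost, cost]
  linarith

end Duality

section Certificate

variable {D S : Type*} [Fintype D] [Fintype S] [DecidableEq S]

/-- Closing a path from the source to `s` by the penalty transfer edge from `s` to the first
vertex of the path gives a loop of type (ii). -/
noncomputable def allotmentPotential (CM : D → S → ℤ) (p : S → ℕ → ℤ) (A : D → S) : S → ℤ :=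
  shortestPathWt (minTransferWt CM A) (fun s => -p s (occ A s)) (Set.range A)

variable {CM : D → S → ℤ} {p : S → ℕ → ℤ}

lemma allotmentPotential_le (A : D → S) (s : S) : allotmentPotential CM p A s ≤ -p s (occ A s) :=
  shortestPathWt_le_self _ _ _ s

lemma allotmentPotential_eq_or_exists_loop (A : D → S) (s : S) :
    allotmentPotential CM p A s = -p s (occ A s) ∨ ∃ L t, IsLoop A L ∧ L.dem t = none ∧
      L.vtx t = s ∧ loopCost CM p A L = allotmentPotential CM p A s + p s (occ A s + 1) := by
  obtain ⟨P, hP, hμ⟩ := exists_shortestPathWt_eq (minTransferWt CM A)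
    (fun s => -p s (occ A s)) (Set.range A) s
  rcases P with _ | ⟨a, l⟩
  · left
    rw [allotmentPotential, hμ]
    simp [pathWt, chainWt]
  · obtain ⟨L, hL, ⟨t, ht, hts⟩, hcost⟩ :=
      exists_loop_of_path CM A p (by simpa using hP.1) hP.2
    refine Or.inr ⟨L, t, hL, ht, hts, ?_⟩
    rw [hcost, allotmentPotential, hμ, pathWt, wpen, List.cons_append]
    simp only [List.headD_cons]
    ring

lemma allotmentPotential_sub_le {A : D → S}
    (hcyc : ∀ L, IsLoop A L → (∀ t, L.dem t ≠ none) → 0 ≤ loopCost CM p A L) (x : D) (s : S) :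
    allotmentPotential CM p A s - allotmentPotential CM p A (A x) ≤ CM x s - CM x (A x) := by
  have hW : ∀ a l, (a :: l).Nodup → (∀ v ∈ a :: l, v ∈ Set.range A) →
      0 ≤ chainWt (minTransferWt CM A) (a :: l ++ [a]) := by
    intro a l hnd hO
    rcases eq_or_ne l [] with rfl | hl
    · simp [chainWt, minTransferWt_self CM A (hO a (by simp))]
    · obtain ⟨L, hL, hnone, hcost⟩ := exists_loop_of_cycle CM A p hl hnd hO
      exact hcost ▸ hcyc L hL hnone
  have := shortestPathWt_le_add _ (fun s => -p s (occ A s)) _ hW (Set.mem_range_self x) s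
  unfold allotmentPotential
  linarith [minTransferWt_le CM A x s]

/-- `hpen_sj'` says that the loops leaving `sj` through their penalty transfer edge would be
nonnegative if `sj` held one more unit. -/
theorem cost_add_le_cost_of_loopCost (hp : ∀ s, Monotone (p s)) (A : D → S) (sj : S) {w : ℤ}
    (hw : w ≤ 0) (hcyc : ∀ L, IsLoop A L → (∀ t, L.dem t ≠ none) → 0 ≤ loopCost CM p A L)
    (hpen : ∀ L t, IsLoop A L → L.dem t = none → L.vtx t ≠ sj → 0 ≤ loopCost CM p A L)
    (hpen_sj : ∀ L, IsLoop A L → (∃ t, L.dem t = none ∧ L.vtx t = sj) → w ≤ loopCost CM p A L)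
    (hpen_sj' : ∀ L t, IsLoop A L → L.dem t = none → L.vtx t = sj →
      0 ≤ loopCost CM p A L + (p sj (occ A sj + 2) - p sj (occ A sj + 1)))
    (B : D → S) : cost CM p A + w ≤ cost CM p B := by
  set μ := allotmentPotential CM p A
  have hclose : ∀ s, (if s = sj then w else 0) ≤ p s (occ A s + 1) + μ s ∧
      0 ≤ p s (occ A s + 2) + μ s := by
    intro s
    have h₁ := hp s (Nat.le_succ (occ A s))
    have h₂ := hp s (Nat.le_succ (occ A s + 1))
    rcases allotmentPotential_eq_or_exists_loop A s with h | ⟨L, t, hL, ht, hts, hcost⟩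
    · have : μ s = -p s (occ A s) := h
      split_ifs <;> constructor <;> linarith
    · have hcost : loopCost CM p A L = μ s + p s (occ A s + 1) := hcost
      by_cases hs : s = sj
      · subst hs
        have := hpen_sj' L t hL ht hts
        rw [if_pos rfl]
        exact ⟨by linarith [hpen_sj L hL ⟨t, ht, hts⟩], by linarith⟩
      · have := hpen L t hL ht (hts ▸ hs)
        rw [if_neg hs]
        constructor <;> linarith
  have hocc : ∀ s n, ∑ j ∈ Icc 1 (occ A s), p s j + occ A s * μ s + (if s = sj then w else 0)
      ≤ ∑ j ∈ Icc 1 n, p s j + n * μ s := by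
    intro s n
    have h₀ : p s (occ A s) + μ s ≤ 0 := by linarith [allotmentPotential_le (CM := CM) (p := p) A s]
    have := sum_Icc_add_le_sum_Icc (g := fun j => p s j + μ s)
      (fun i j hij => by simpa using hp s hij) (by split_ifs <;> simp [hw]) h₀ (hclose s).1
      (hclose s).2 n
    simpa [sum_add_distrib, mul_comm] using this
  simpa using cost_add_sum_le_cost CM p μ _ (allotmentPotential_sub_le hcyc) hocc B

end Certificate

section Deletion

lemma monotone_of_penalty {c : ℕ} {q : ℕ → ℤ} (h₀ : ∀ j, j ≤ c → q j = 0)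
    (hpos : ∀ j, c < j → 0 < q j) (hmono : ∀ j, c < j → q j ≤ q (j + 1)) : Monotone q := by
  refine monotone_nat_of_le_succ fun j => ?_
  rcases lt_or_ge c j with h | h
  · exact hmono j h
  · rw [h₀ j h]
    rcases lt_or_ge c (j + 1) with h' | h'
    · exact (hpos _ h').le
    · exact (h₀ _ h').ge

variable {D S : Type*} [Fintype D] [DecidableEq D] [DecidableEq S]

lemma occ_eq_occ_subtype_ne_add (A : D → S) (d : D) (s : S) :
    occ A s = occ (fun x : {x // x ≠ d} => A x) s + if A d = s then 1 else 0 := by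
  have := occ_eq_sum A s
  rw [Fintype.sum_eq_add_sum_subtype_ne _ d, ← occ_eq_sum (fun x : {x // x ≠ d} => A x)] at this
  split_ifs at this ⊢ <;> omega

variable [Fintype S] {CM : D → S → ℤ} {p : S → ℕ → ℤ}

lemma not_inducesNegLoop_of_forall_cost_le {A : D → S} (h : ∀ B, cost CM p A ≤ cost CM p B) :
    ¬ InducesNegLoop CM p A := by
  rintro ⟨L, hL, hneg⟩
  have := h (removeLoop A L)
  rw [hL.cost_removeLoop] at this
  linarith

theorem cost_subtype_ne_add_le_cost (hp : ∀ s, Monotone (p s)) {A : D → S}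
    (hA : ¬ InducesNegLoop CM p A) (d : D) {w : ℤ} (hw : w ≤ 0)
    (hpen : ∀ L : Loop S {x // x ≠ d}, IsLoop (fun x : {x // x ≠ d} => A x.1) L →
      (∃ t, L.dem t = none ∧ L.vtx t = A d) →
      w ≤ loopCost (fun (x : {x // x ≠ d}) s => CM x.1 s) p (fun x : {x // x ≠ d} => A x.1) L)
    (B : {x // x ≠ d} → S) :
    cost (fun (x : {x // x ≠ d}) s => CM x.1 s) p (fun x : {x // x ≠ d} => A x.1) + w
      ≤ cost (fun (x : {x // x ≠ d}) s => CM x.1 s) p B := by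
  have hnn : ∀ L, IsLoop A L → 0 ≤ loopCost CM p A L := fun L hL => not_lt.1 fun h => hA ⟨L, hL, h⟩
  have hocc := occ_eq_occ_subtype_ne_add A d
  refine cost_add_le_cost_of_loopCost hp _ (A d) hw (fun L hL hnone => ?_)
    (fun L t hL ht hts => ?_) hpen (fun L t hL ht hts => ?_) B
  · rw [← loopCost_mapDem_of_forall CM p A Subtype.val hnone]
    exact hnn _ hL.mapDem
  · have := loopCost_mapDem_le CM hp A Subtype.val_injective hL ht
    rw [hocc, if_neg (Ne.symm hts), add_zero, sub_self, add_zero] at this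
    linarith [hnn _ hL.mapDem]
  · have := loopCost_mapDem_le CM hp A Subtype.val_injective hL ht
    rw [hts, hocc, if_pos rfl] at this
    linarith [hnn _ hL.mapDem]

end Deletion

/-- let `A1` induce no negative loop and let `d` be a demand unit
with `A1 d = sj`.  Let `A2` be the restriction of `A1` to `D ∖ {d}` (modelled by
the subtype `{x : D // x ≠ d}`).
(a) If every loop of `A2` containing a penalty transfer edge directed out of
`sj` has nonnegative cost, then `A2` induces no negative loop.
(b) If `Cmin` is such a loop of minimum cost and its cost is negative, then
removing `Cmin` yields an allotment inducing no negative loop. -/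
theorem restore_optimality_after_deletion
    (D S : Type) [Fintype D] [DecidableEq D] [Fintype S] [DecidableEq S]
    (CM : D → S → ℤ) (c : S → ℕ) (p : S → ℕ → ℤ)
    (hp0 : ∀ s j, j ≤ c s → p s j = 0)
    (hppos : ∀ s j, c s < j → 0 < p s j)
    (hpmono : ∀ s j, c s < j → p s j ≤ p s (j + 1))
    (A1 : D → S) (d : D) (sj : S) (hd : A1 d = sj)
    (hA1 : ¬ InducesNegLoop CM p A1) :
    ((∀ L : Loop S {x : D // x ≠ d}, IsLoop (fun x : {x : D // x ≠ d} => A1 x.1) L →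
        (∃ t, L.dem t = none ∧ L.vtx t = sj) →
        0 ≤ loopCost (fun (x : {x : D // x ≠ d}) s => CM x.1 s) p (fun x : {x : D // x ≠ d} => A1 x.1) L) →
      ¬ InducesNegLoop (fun (x : {x : D // x ≠ d}) s => CM x.1 s) p (fun x : {x : D // x ≠ d} => A1 x.1)) ∧
    (∀ Cmin : Loop S {x : D // x ≠ d}, IsLoop (fun x : {x : D // x ≠ d} => A1 x.1) Cmin →
        (∃ t, Cmin.dem t = none ∧ Cmin.vtx t = sj) →
        (∀ L : Loop S {x : D // x ≠ d}, IsLoop (fun x : {x : D // x ≠ d} => A1 x.1) L →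
          (∃ t, L.dem t = none ∧ L.vtx t = sj) →
          loopCost (fun (x : {x : D // x ≠ d}) s => CM x.1 s) p (fun x : {x : D // x ≠ d} => A1 x.1) Cmin
            ≤ loopCost (fun (x : {x : D // x ≠ d}) s => CM x.1 s) p (fun x : {x : D // x ≠ d} => A1 x.1) L) →
        loopCost (fun (x : {x : D // x ≠ d}) s => CM x.1 s) p (fun x : {x : D // x ≠ d} => A1 x.1) Cmin < 0 →
        ¬ InducesNegLoop (fun (x : {x : D // x ≠ d}) s => CM x.1 s) p
            (removeLoop (fun x : {x : D // x ≠ d} => A1 x.1) Cmin)) := by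
  have hp : ∀ s, Monotone (p s) := fun s => monotone_of_penalty (hp0 s) (hppos s) (hpmono s)
  subst hd
  refine ⟨fun hnonneg => not_inducesNegLoop_of_forall_cost_le fun B => ?_,
    fun Cmin hCmin _ hmin hneg => not_inducesNegLoop_of_forall_cost_le fun B => ?_⟩
  · simpa using cost_subtype_ne_add_le_cost hp hA1 d le_rfl hnonneg B
  · rw [hCmin.cost_removeLoop]
    exact cost_subtype_ne_add_le_cost hp hA1 d hneg.le hmin B
end

section
/- Let A be an allotment and s_j ∈ S a service center such that A induces no negative loop avoiding the vertex s_j (i.e., every loop of A of negative cost visits s_j). Then the minimum, over all directed paths from s_j^out to s_j^in in the weighted digraph NLoop(A, s_j), of the total edge weight, equals the minimum cost over all loops of A that begin at s_j. -/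
open Finset

/-- `Γ_min(u,v)`: the minimum weight of a transfer edge from `u` to `v` in
`Γ(A)` (`⊤` if there is no demand unit assigned to `u`). -/
noncomputable def gammaMin {D S : Type*} [Fintype D] [DecidableEq S]
    (CM : D → S → ℤ) (A : D → S) (u v : S) : WithTop ℤ :=
  (Finset.univ.filter fun d => A d = u).inf fun d => ((CM d v - CM d u : ℤ) : WithTop ℤ)


/-! ### Auxiliary lemmas -/

lemma cnext_val {n : ℕ} (k : Fin n) : (cnext k).val = (k.val + 1) % n := rfl

lemma cnext_eq_add_one {n : ℕ} (k : Fin (n + 1)) : cnext k = k + 1 := by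
  ext; simp [cnext, Fin.add_def]

lemma fin_succ_castSucc_add_one {n : ℕ} (t : Fin n) :
    ((t.castSucc.succ : Fin (n + 2)) + 1) = t.succ.succ := by
  ext; simp [Fin.add_def]

lemma fin_last_succ_add_one {n : ℕ} : ((Fin.last n).succ : Fin (n + 2)) + 1 = 0 := by
  ext; simp [Fin.add_def]

lemma fin_one_add_last {n : ℕ} : (1 : Fin (n + 2)) + Fin.last (n + 1) = 0 := by
  ext
  simp only [Fin.add_def, Fin.val_one, Fin.val_last, Fin.val_zero]
  rw [show 1 + (n + 1) = n + 2 by omega, Nat.mod_self]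

lemma edgeWt_some {D S : Type*} [Fintype D] [DecidableEq D] [Fintype S] [DecidableEq S]
    (CM : D → S → ℤ) (p : S → ℕ → ℤ) (A : D → S) {L : Loop S D} {t : Fin L.m} {d : D}
    (h : L.dem t = some d) :
    edgeWt CM p A L t = CM d (L.vtx (cnext t)) - CM d (L.vtx t) := by
  unfold edgeWt; rw [h]

lemma edgeWt_none {D S : Type*} [Fintype D] [DecidableEq D] [Fintype S] [DecidableEq S]
    (CM : D → S → ℤ) (p : S → ℕ → ℤ) (A : D → S) {L : Loop S D} {t : Fin L.m}
    (h : L.dem t = none) :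
    edgeWt CM p A L t = wpen p A (L.vtx t) (L.vtx (cnext t)) := by
  unfold edgeWt; rw [h]

lemma gammaMin_le {D S : Type*} [Fintype D] [DecidableEq S]
    (CM : D → S → ℤ) (A : D → S) {u : S} (v : S) {d : D} (hd : A d = u) :
    gammaMin CM A u v ≤ ((CM d v - CM d u : ℤ) : WithTop ℤ) :=
  Finset.inf_le (by simp [hd])

lemma gammaMin_exists {D S : Type*} [Fintype D] [DecidableEq S]
    (CM : D → S → ℤ) (A : D → S) {u v : S} (h : gammaMin CM A u v ≠ ⊤) :
    ∃ d, A d = u ∧ gammaMin CM A u v = ((CM d v - CM d u : ℤ) : WithTop ℤ) := by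
  rcases Finset.eq_empty_or_nonempty (Finset.univ.filter fun d => A d = u) with he | hne
  · exact absurd (by simp [gammaMin, he]) h
  · obtain ⟨d, hd, hinf⟩ := Finset.exists_mem_eq_inf _ hne
      (fun d => ((CM d v - CM d u : ℤ) : WithTop ℤ))
    exact ⟨d, (Finset.mem_filter.mp hd).2, hinf⟩

section Skeleton

set_option linter.unusedSectionVars false

variable {D S : Type*} [Fintype D] [DecidableEq D] [Fintype S] [DecidableEq S]

/-- The vertex sequence of the loop built from a path `sj, τ 0, …, τ m`. -/
def mkVtx (sj : S) {m : ℕ} (τ : Fin (m + 1) → S) : Fin (m + 2) → S := fun k =>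
  if h : k.val = 0 then sj else τ ⟨k.val - 1, by omega⟩

/-- The demand sequence of the loop built from a path. -/
def mkDem (D : Type*) {m : ℕ} (d0 : D) (dm : Fin m → D) (dl : Option D) :
    Fin (m + 2) → Option D := fun k =>
  if h0 : k.val = 0 then some d0
  else if h : k.val ≤ m then some (dm ⟨k.val - 1, by omega⟩)
  else dl

variable (CM : D → S → ℤ) (p : S → ℕ → ℤ) (A : D → S) (sj : S)
  {m : ℕ} (τ : Fin (m + 1) → S) (d0 : D) (dm : Fin m → D) (dl : Option D)

lemma mkVtx_zero : mkVtx sj τ 0 = sj := rfl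

lemma mkVtx_eq_tau (k : Fin (m + 2)) (i : Fin (m + 1)) (h : k.val = i.val + 1) :
    mkVtx sj τ k = τ i := by
  unfold mkVtx
  rw [dif_neg (by omega)]
  congr 1
  apply Fin.ext
  show k.val - 1 = i.val
  omega

lemma mkVtx_inj (hinj : Function.Injective τ) (hne : ∀ t, τ t ≠ sj) :
    Function.Injective (mkVtx sj τ) := by
  intro a b h
  unfold mkVtx at h
  split_ifs at h with h1 h2 h2
  · exact Fin.ext (by omega)
  · exact absurd h.symm (hne _)
  · exact absurd h (hne _)
  · have h3 : a.val - 1 = b.val - 1 := congrArg Fin.val (hinj h)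
    exact Fin.ext (by omega)

lemma mkDem_zero : mkDem D d0 dm dl 0 = some d0 := rfl

lemma mkDem_eq_mid (k : Fin (m + 2)) (t : Fin m) (h : k.val = t.val + 1) :
    mkDem D d0 dm dl k = some (dm t) := by
  have ht := t.isLt
  unfold mkDem
  rw [dif_neg (by omega), dif_pos (by omega)]
  congr 2
  apply Fin.ext
  show k.val - 1 = t.val
  omega

lemma mkDem_eq_last (k : Fin (m + 2)) (h2 : ¬ k.val ≤ m) :
    mkDem D d0 dm dl k = dl := by
  have hk := k.isLt
  unfold mkDem
  rw [dif_neg (by omega), dif_neg h2]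

lemma cnext_lastsucc : cnext ((Fin.last m).succ : Fin (m + 2)) = 0 := by
  apply Fin.ext
  rw [cnext_val]
  simp only [Fin.val_succ, Fin.val_last, Fin.val_zero]
  rw [show m + 1 + 1 = m + 2 from rfl, Nat.mod_self]

lemma cnext_zero' : (cnext (0 : Fin (m + 2))).val = 1 := by
  rw [cnext_val, Fin.val_zero]
  rw [show (0 : ℕ) + 1 = 1 from rfl, Nat.one_mod]

lemma cnext_mid' (t : Fin m) :
    (cnext ((t.castSucc.succ : Fin (m + 2)))).val = t.val + 2 := by
  have ht := t.isLt
  rw [cnext_val]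
  simp only [Fin.val_succ, Fin.coe_castSucc]
  exact Nat.mod_eq_of_lt (by omega)

/-- Building a loop out of a path from `sj` back to `sj`. -/
lemma loop_skeleton (hinj : Function.Injective τ) (hne : ∀ t, τ t ≠ sj)
    (hd0A : A d0 = sj) (hdmA : ∀ t, A (dm t) = τ t.castSucc)
    (hdlA : ∀ d, dl = some d → A d = τ (Fin.last m)) :
    IsLoop A (⟨m + 2, mkVtx sj τ, mkDem D d0 dm dl⟩ : Loop S D)
    ∧ loopCost CM p A ⟨m + 2, mkVtx sj τ, mkDem D d0 dm dl⟩
      = ((CM d0 (τ 0) - CM d0 sj)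
        + ∑ t : Fin m, (CM (dm t) (τ t.succ) - CM (dm t) (τ t.castSucc)))
        + edgeWt CM p A ⟨m + 2, mkVtx sj τ, mkDem D d0 dm dl⟩ ((Fin.last m).succ) := by
  have htail : ∀ (k : Fin (m + 2)) (d : D), mkDem D d0 dm dl k = some d → A d = mkVtx sj τ k := by
    intro k d hk
    have hklt := k.isLt
    by_cases h1 : k.val = 0
    · rw [show k = (0 : Fin (m + 2)) from Fin.ext h1] at hk ⊢
      rw [mkDem_zero] at hk
      obtain rfl : d0 = d := Option.some.inj hk
      rw [mkVtx_zero]; exact hd0A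
    · by_cases h2 : k.val ≤ m
      · obtain ⟨j, hj⟩ : ∃ j : Fin m, j.val = k.val - 1 := ⟨⟨k.val - 1, by omega⟩, rfl⟩
        rw [mkDem_eq_mid d0 dm dl k j (by omega)] at hk
        obtain rfl := Option.some.inj hk
        rw [mkVtx_eq_tau sj τ k j.castSucc (by rw [Fin.coe_castSucc]; omega)]
        exact hdmA j
      · rw [mkDem_eq_last d0 dm dl k h2] at hk
        rw [mkVtx_eq_tau sj τ k (Fin.last m) (by rw [Fin.val_last]; omega)]
        exact hdlA d hk
  have hnone : ∀ k : Fin (m + 2), mkDem D d0 dm dl k = none → k = (Fin.last m).succ := by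
    intro k hk
    have hklt := k.isLt
    by_cases h1 : k.val = 0
    · rw [show k = (0 : Fin (m + 2)) from Fin.ext h1, mkDem_zero] at hk
      simp at hk
    · by_cases h2 : k.val ≤ m
      · obtain ⟨j, hj⟩ : ∃ j : Fin m, j.val = k.val - 1 := ⟨⟨k.val - 1, by omega⟩, rfl⟩
        rw [mkDem_eq_mid d0 dm dl k j (by omega)] at hk
        simp at hk
      · apply Fin.ext
        simp only [Fin.val_succ, Fin.val_last]
        omega
  have hvinj := mkVtx_inj sj τ hinj hne
  constructor
  · refine ⟨Nat.le_add_left 2 m, hvinj, htail, ?_, ?_⟩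
    · intro t t' d ht ht'
      exact hvinj ((htail t d ht).symm.trans (htail t' d ht'))
    · intro t t' ht ht'
      rw [hnone t ht, hnone t' ht']
  · have hcost : loopCost CM p A ⟨m + 2, mkVtx sj τ, mkDem D d0 dm dl⟩
        = ∑ k : Fin (m + 2), edgeWt CM p A ⟨m + 2, mkVtx sj τ, mkDem D d0 dm dl⟩ k := rfl
    rw [hcost, Fin.sum_univ_succ, Fin.sum_univ_castSucc, ← add_assoc]
    refine congrArg₂ (· + ·) (congrArg₂ (· + ·) ?_ ?_) rfl
    · show edgeWt CM p A ⟨m + 2, mkVtx sj τ, mkDem D d0 dm dl⟩ (0 : Fin (m + 2))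
        = CM d0 (τ 0) - CM d0 sj
      have hd : (⟨m + 2, mkVtx sj τ, mkDem D d0 dm dl⟩ : Loop S D).dem (0 : Fin (m + 2))
          = some d0 := rfl
      rw [edgeWt_some CM p A hd]
      show CM d0 (mkVtx sj τ (cnext 0)) - CM d0 (mkVtx sj τ 0) = _
      rw [mkVtx_zero, mkVtx_eq_tau sj τ (cnext 0) 0 (by rw [cnext_zero', Fin.val_zero])]
    · refine Finset.sum_congr rfl fun t _ => ?_
      show edgeWt CM p A ⟨m + 2, mkVtx sj τ, mkDem D d0 dm dl⟩
          ((t.castSucc.succ : Fin (m + 2)))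
        = CM (dm t) (τ t.succ) - CM (dm t) (τ t.castSucc)
      have hd : (⟨m + 2, mkVtx sj τ, mkDem D d0 dm dl⟩ : Loop S D).dem
          ((t.castSucc.succ : Fin (m + 2))) = some (dm t) :=
        mkDem_eq_mid d0 dm dl (t.castSucc.succ : Fin (m + 2)) t (by simp)
      rw [edgeWt_some CM p A hd]
      show CM (dm t) (mkVtx sj τ (cnext (t.castSucc.succ : Fin (m + 2))))
          - CM (dm t) (mkVtx sj τ (t.castSucc.succ : Fin (m + 2))) = _
      rw [mkVtx_eq_tau sj τ (t.castSucc.succ : Fin (m + 2)) t.castSucc (by simp),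
        mkVtx_eq_tau sj τ (cnext (t.castSucc.succ : Fin (m + 2))) t.succ
          (by rw [cnext_mid', Fin.val_succ])]

end Skeleton

lemma pathToLoop {D S : Type} [Fintype D] [DecidableEq D] [Fintype S] [DecidableEq S]
    (CM : D → S → ℤ) (p : S → ℕ → ℤ) (A : D → S) (sj : S) (z : ℤ)
    (m : ℕ) (τ : Fin (m + 1) → S) (hinj : Function.Injective τ) (hne : ∀ t, τ t ≠ sj)
    (hsum : gammaMin CM A sj (τ 0)
          + (∑ t : Fin m, gammaMin CM A (τ t.castSucc) (τ t.succ))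
          + min (gammaMin CM A (τ (Fin.last m)) sj)
              ((wpen p A (τ (Fin.last m)) sj : ℤ) : WithTop ℤ)
          = (z : WithTop ℤ)) :
    ∃ L : Loop S D, IsLoop A L ∧
        (((∀ t, L.dem t ≠ none) ∧ (∃ t, L.vtx t = sj)) ∨
         (∃ t, L.dem t = none ∧ L.vtx (cnext t) = sj)) ∧
        loopCost CM p A L = z := by
  have h0 : gammaMin CM A sj (τ 0) ≠ ⊤ := by
    intro h; rw [h] at hsum; simp at hsum
  have hmidtop : (∑ t : Fin m, gammaMin CM A (τ t.castSucc) (τ t.succ)) ≠ ⊤ := by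
    intro h; rw [h] at hsum; simp at hsum
  have hmid : ∀ t : Fin m, gammaMin CM A (τ t.castSucc) (τ t.succ) ≠ ⊤ := by
    intro t ht
    exact hmidtop (WithTop.sum_eq_top.mpr ⟨t, Finset.mem_univ t, ht⟩)
  obtain ⟨d0, hd0A, hd0⟩ := gammaMin_exists CM A h0
  choose dm hdmA hdm using fun t => gammaMin_exists CM A (hmid t)
  have hBsum : (∑ t : Fin m, gammaMin CM A (τ t.castSucc) (τ t.succ))
      = ((∑ t : Fin m, (CM (dm t) (τ t.succ) - CM (dm t) (τ t.castSucc)) : ℤ) : WithTop ℤ) := by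
    rw [WithTop.coe_sum]
    exact Finset.sum_congr rfl fun t _ => hdm t
  rcases le_or_gt (gammaMin CM A (τ (Fin.last m)) sj)
      ((wpen p A (τ (Fin.last m)) sj : ℤ) : WithTop ℤ) with hc | hc
  · -- last edge is a transfer edge
    have hlt : gammaMin CM A (τ (Fin.last m)) sj ≠ ⊤ :=
      ne_top_of_le_ne_top (WithTop.coe_ne_top) hc
    obtain ⟨dlast, hdlA, hdl⟩ := gammaMin_exists CM A hlt
    obtain ⟨hIs, hCost⟩ := loop_skeleton CM p A sj τ d0 dm (some dlast) hinj hne hd0A hdmA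
      (fun d hd => by obtain rfl : dlast = d := Option.some.inj hd; exact hdlA)
    refine ⟨_, hIs, ?_, ?_⟩
    · left
      constructor
      · intro k hk
        have hk' : mkDem D d0 dm (some dlast) k = none := hk
        have hklt := k.isLt
        unfold mkDem at hk'
        split_ifs at hk' <;> simp at hk'
      · exact ⟨0, rfl⟩
    · have hdldem : (⟨m + 2, mkVtx sj τ, mkDem D d0 dm (some dlast)⟩ : Loop S D).dem
          ((Fin.last m).succ : Fin (m + 2)) = some dlast :=
        mkDem_eq_last d0 dm (some dlast) ((Fin.last m).succ : Fin (m + 2))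
          (by rw [Fin.val_succ, Fin.val_last]; omega)
      have hlast : edgeWt CM p A (⟨m + 2, mkVtx sj τ, mkDem D d0 dm (some dlast)⟩ : Loop S D)
          ((Fin.last m).succ) = CM dlast sj - CM dlast (τ (Fin.last m)) := by
        rw [edgeWt_some CM p A hdldem]
        show CM dlast (mkVtx sj τ (cnext ((Fin.last m).succ : Fin (m + 2))))
            - CM dlast (mkVtx sj τ ((Fin.last m).succ : Fin (m + 2))) = _
        rw [cnext_lastsucc, mkVtx_zero,
          mkVtx_eq_tau sj τ ((Fin.last m).succ : Fin (m + 2)) (Fin.last m)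
            (by rw [Fin.val_succ])]
      rw [hCost, hlast]
      rw [hd0, hBsum, min_eq_left hc, hdl] at hsum
      exact_mod_cast hsum
  · -- last edge is a penalty edge
    obtain ⟨hIs, hCost⟩ := loop_skeleton CM p A sj τ d0 dm none hinj hne hd0A hdmA
      (fun d hd => by simp at hd)
    have hdldem : (⟨m + 2, mkVtx sj τ, mkDem D d0 dm none⟩ : Loop S D).dem
        ((Fin.last m).succ : Fin (m + 2)) = none :=
      mkDem_eq_last d0 dm none ((Fin.last m).succ : Fin (m + 2))
        (by rw [Fin.val_succ, Fin.val_last]; omega)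
    refine ⟨_, hIs, ?_, ?_⟩
    · right
      refine ⟨(Fin.last m).succ, hdldem, ?_⟩
      show mkVtx sj τ (cnext ((Fin.last m).succ : Fin (m + 2))) = sj
      rw [cnext_lastsucc, mkVtx_zero]
    · have hlast : edgeWt CM p A (⟨m + 2, mkVtx sj τ, mkDem D d0 dm none⟩ : Loop S D)
          ((Fin.last m).succ) = wpen p A (τ (Fin.last m)) sj := by
        rw [edgeWt_none CM p A hdldem]
        show wpen p A (mkVtx sj τ ((Fin.last m).succ : Fin (m + 2)))
            (mkVtx sj τ (cnext ((Fin.last m).succ : Fin (m + 2)))) = _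
        rw [cnext_lastsucc, mkVtx_zero,
          mkVtx_eq_tau sj τ ((Fin.last m).succ : Fin (m + 2)) (Fin.last m)
            (by rw [Fin.val_succ])]
      rw [hCost, hlast]
      rw [hd0, hBsum, min_eq_right hc.le] at hsum
      exact_mod_cast hsum

lemma loopToPath {D S : Type} [Fintype D] [DecidableEq D] [Fintype S] [DecidableEq S]
    (CM : D → S → ℤ) (p : S → ℕ → ℤ) (A : D → S) (sj : S)
    (L : Loop S D) (hL : IsLoop A L)
    (hbeg : ((∀ t, L.dem t ≠ none) ∧ (∃ t, L.vtx t = sj)) ∨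
         (∃ t, L.dem t = none ∧ L.vtx (cnext t) = sj)) :
    ∃ z' : ℤ, z' ≤ loopCost CM p A L ∧ ∃ (n : ℕ) (σ : Fin (n + 1) → S),
        Function.Injective σ ∧ (∀ t, σ t ≠ sj) ∧
        gammaMin CM A sj (σ 0)
          + (∑ t : Fin n, gammaMin CM A (σ t.castSucc) (σ t.succ))
          + min (gammaMin CM A (σ (Fin.last n)) sj)
              ((wpen p A (σ (Fin.last n)) sj : ℤ) : WithTop ℤ)
          = (z' : WithTop ℤ) := by
  obtain ⟨N, vtx, dem⟩ := L
  obtain ⟨hN2, hvinj, htail, hdinj, hnone⟩ := hL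
  have hN : 2 ≤ N := hN2
  obtain ⟨n, rfl⟩ : ∃ n, N = n + 2 := ⟨N - 2, by omega⟩
  obtain ⟨k₀, hk0, hoff⟩ : ∃ k₀ : Fin (n + 2), vtx k₀ = sj ∧
      ∀ k : Fin (n + 2), k ≠ k₀ + Fin.last (n + 1) → dem k ≠ none := by
    rcases hbeg with ⟨hall, k₀, hk0⟩ | ⟨t₀, ht₀, hk0⟩
    · exact ⟨k₀, hk0, fun k _ => hall k⟩
    · refine ⟨cnext t₀, hk0, fun k hk hkn => hk ?_⟩
      have hkt : k = t₀ := hnone k t₀ hkn ht₀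
      rw [hkt, cnext_eq_add_one, add_assoc, fin_one_add_last, add_zero]
  have hinj' : Function.Injective (fun i : Fin (n + 1) => vtx (k₀ + i.succ)) := by
    intro i i' h
    simp only at h
    exact Fin.succ_injective _ (add_left_cancel (hvinj h))
  have hne' : ∀ i : Fin (n + 1), vtx (k₀ + i.succ) ≠ sj := by
    intro i h
    have h2 : k₀ + i.succ = k₀ + 0 := by rw [add_zero]; exact hvinj (h.trans hk0.symm)
    exact Fin.succ_ne_zero i (add_left_cancel h2)
  have hcost : ((loopCost CM p A ⟨n + 2, vtx, dem⟩ : ℤ) : WithTop ℤ)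
      = (((edgeWt CM p A ⟨n + 2, vtx, dem⟩ (k₀ + (0 : Fin (n + 2))) : ℤ) : WithTop ℤ)
        + ∑ t : Fin n, ((edgeWt CM p A ⟨n + 2, vtx, dem⟩
            (k₀ + (t.castSucc.succ : Fin (n + 2))) : ℤ) : WithTop ℤ))
        + ((edgeWt CM p A ⟨n + 2, vtx, dem⟩
            (k₀ + ((Fin.last n).succ : Fin (n + 2))) : ℤ) : WithTop ℤ) := by
    have h1 : loopCost CM p A ⟨n + 2, vtx, dem⟩
        = ∑ j : Fin (n + 2), edgeWt CM p A ⟨n + 2, vtx, dem⟩ (k₀ + j) :=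
      (Fintype.sum_equiv (Equiv.addLeft k₀)
        (fun j => edgeWt CM p A ⟨n + 2, vtx, dem⟩ (k₀ + j))
        (fun k => edgeWt CM p A ⟨n + 2, vtx, dem⟩ k) (fun j => rfl)).symm
    rw [h1, WithTop.coe_sum, Fin.sum_univ_succ, Fin.sum_univ_castSucc, ← add_assoc]
  have hne0 : k₀ ≠ k₀ + Fin.last (n + 1) := by
    intro h
    have h2 : (0 : Fin (n + 2)) = Fin.last (n + 1) :=
      add_left_cancel ((add_zero k₀).trans h)
    have hval := congrArg Fin.val h2
    simp only [Fin.val_zero, Fin.val_last] at hval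
    omega
  obtain ⟨d, hd⟩ := Option.ne_none_iff_exists'.mp (hoff k₀ hne0)
  have hd' : (⟨n + 2, vtx, dem⟩ : Loop S D).dem k₀ = some d := hd
  have hdA : A d = sj := (htail k₀ d hd).trans hk0
  have hwt0 : edgeWt CM p A ⟨n + 2, vtx, dem⟩ (k₀ + (0 : Fin (n + 2)))
      = CM d (vtx (k₀ + ((0 : Fin (n + 1)).succ : Fin (n + 2)))) - CM d sj := by
    rw [add_zero, edgeWt_some CM p A hd']
    show CM d (vtx (cnext k₀)) - CM d (vtx k₀) = _
    rw [cnext_eq_add_one, hk0, Fin.succ_zero_eq_one]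
  have hb0 : gammaMin CM A sj (vtx (k₀ + ((0 : Fin (n + 1)).succ : Fin (n + 2))))
      ≤ ((edgeWt CM p A ⟨n + 2, vtx, dem⟩ (k₀ + (0 : Fin (n + 2))) : ℤ) : WithTop ℤ) := by
    rw [hwt0]
    exact_mod_cast gammaMin_le CM A _ hdA
  have hbmid : ∀ t : Fin n,
      gammaMin CM A (vtx (k₀ + (t.castSucc.succ : Fin (n + 2))))
        (vtx (k₀ + (t.succ.succ : Fin (n + 2))))
      ≤ ((edgeWt CM p A ⟨n + 2, vtx, dem⟩
          (k₀ + (t.castSucc.succ : Fin (n + 2))) : ℤ) : WithTop ℤ) := by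
    intro t
    have ht := t.isLt
    have hnet : k₀ + (t.castSucc.succ : Fin (n + 2)) ≠ k₀ + Fin.last (n + 1) := by
      intro h
      have h2 := congrArg Fin.val (add_left_cancel h)
      simp only [Fin.val_succ, Fin.coe_castSucc, Fin.val_last] at h2
      omega
    obtain ⟨d, hd⟩ := Option.ne_none_iff_exists'.mp (hoff _ hnet)
    have hd' : (⟨n + 2, vtx, dem⟩ : Loop S D).dem
        (k₀ + (t.castSucc.succ : Fin (n + 2))) = some d := hd
    have hdA : A d = vtx (k₀ + (t.castSucc.succ : Fin (n + 2))) := htail _ d hd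
    have hwt : edgeWt CM p A ⟨n + 2, vtx, dem⟩ (k₀ + (t.castSucc.succ : Fin (n + 2)))
        = CM d (vtx (k₀ + (t.succ.succ : Fin (n + 2))))
          - CM d (vtx (k₀ + (t.castSucc.succ : Fin (n + 2)))) := by
      rw [edgeWt_some CM p A hd']
      show CM d (vtx (cnext (k₀ + (t.castSucc.succ : Fin (n + 2)))))
          - CM d (vtx (k₀ + (t.castSucc.succ : Fin (n + 2)))) = _
      rw [cnext_eq_add_one, add_assoc, fin_succ_castSucc_add_one]
    rw [hwt]
    exact_mod_cast gammaMin_le CM A _ hdA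
  have hblast :
      min (gammaMin CM A (vtx (k₀ + ((Fin.last n).succ : Fin (n + 2)))) sj)
        ((wpen p A (vtx (k₀ + ((Fin.last n).succ : Fin (n + 2)))) sj : ℤ) : WithTop ℤ)
      ≤ ((edgeWt CM p A ⟨n + 2, vtx, dem⟩
          (k₀ + ((Fin.last n).succ : Fin (n + 2))) : ℤ) : WithTop ℤ) := by
    have hhead : cnext (k₀ + ((Fin.last n).succ : Fin (n + 2))) = k₀ := by
      rw [cnext_eq_add_one, add_assoc, fin_last_succ_add_one, add_zero]
    cases hdem : dem (k₀ + ((Fin.last n).succ : Fin (n + 2))) with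
    | some d =>
      have hd' : (⟨n + 2, vtx, dem⟩ : Loop S D).dem
          (k₀ + ((Fin.last n).succ : Fin (n + 2))) = some d := hdem
      have hdA : A d = vtx (k₀ + ((Fin.last n).succ : Fin (n + 2))) := htail _ d hdem
      have hwt : edgeWt CM p A ⟨n + 2, vtx, dem⟩ (k₀ + ((Fin.last n).succ : Fin (n + 2)))
          = CM d sj - CM d (vtx (k₀ + ((Fin.last n).succ : Fin (n + 2)))) := by
        rw [edgeWt_some CM p A hd']
        show CM d (vtx (cnext (k₀ + ((Fin.last n).succ : Fin (n + 2)))))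
            - CM d (vtx (k₀ + ((Fin.last n).succ : Fin (n + 2)))) = _
        rw [hhead, hk0]
      refine le_trans (min_le_left _ _) ?_
      rw [hwt]
      exact_mod_cast gammaMin_le CM A sj hdA
    | none =>
      have hd' : (⟨n + 2, vtx, dem⟩ : Loop S D).dem
          (k₀ + ((Fin.last n).succ : Fin (n + 2))) = none := hdem
      have hwt : edgeWt CM p A ⟨n + 2, vtx, dem⟩ (k₀ + ((Fin.last n).succ : Fin (n + 2)))
          = wpen p A (vtx (k₀ + ((Fin.last n).succ : Fin (n + 2)))) sj := by
        rw [edgeWt_none CM p A hd']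
        show wpen p A (vtx (k₀ + ((Fin.last n).succ : Fin (n + 2))))
            (vtx (cnext (k₀ + ((Fin.last n).succ : Fin (n + 2))))) = _
        rw [hhead, hk0]
      rw [hwt]
      exact min_le_right _ _
  have htot : gammaMin CM A sj (vtx (k₀ + ((0 : Fin (n + 1)).succ : Fin (n + 2))))
      + (∑ t : Fin n, gammaMin CM A (vtx (k₀ + (t.castSucc.succ : Fin (n + 2))))
          (vtx (k₀ + (t.succ.succ : Fin (n + 2)))))
      + min (gammaMin CM A (vtx (k₀ + ((Fin.last n).succ : Fin (n + 2)))) sj)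
          ((wpen p A (vtx (k₀ + ((Fin.last n).succ : Fin (n + 2)))) sj : ℤ) : WithTop ℤ)
      ≤ ((loopCost CM p A ⟨n + 2, vtx, dem⟩ : ℤ) : WithTop ℤ) := by
    rw [hcost]
    exact add_le_add (add_le_add hb0 (Finset.sum_le_sum fun t _ => hbmid t)) hblast
  have hfin := WithTop.ne_top_iff_exists.mp (ne_top_of_le_ne_top WithTop.coe_ne_top htot)
  obtain ⟨z', hz'⟩ := hfin
  refine ⟨z', ?_, n, fun i => vtx (k₀ + i.succ), hinj', hne', ?_⟩
  · have h2 := htot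
    rw [← hz'] at h2
    exact_mod_cast h2
  · exact hz'.symm


/-- if `A` induces no negative loop avoiding `sj`, then the minimum
total weight over all directed paths from `sj^out` to `sj^in` in `NLoop(A, sj)`
equals the minimum cost over all loops of `A` beginning at `sj`.  A path from
`sj^out` to `sj^in` is encoded by its sequence `τ` of (pairwise distinct, `≠ sj`)
intermediate vertices; its weight is the `Γ_min` weight out of `sj`, plus the
`Γ_min` weights of the internal edges, plus the weight `min(Γ_min, w_pen)` of the
final edge into `sj^in`; a weight of `⊤` means some required edge is absent.
The minima are compared via `IsLeast`. -/
theorem nloop_shortest_path_eq_min_loop_from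
    (D S : Type) [Fintype D] [DecidableEq D] [Fintype S] [DecidableEq S]
    (CM : D → S → ℤ) (c : S → ℕ) (p : S → ℕ → ℤ)
    (hp0 : ∀ s j, j ≤ c s → p s j = 0)
    (hppos : ∀ s j, c s < j → 0 < p s j)
    (hpmono : ∀ s j, c s < j → p s j ≤ p s (j + 1))
    (A : D → S) (sj : S)
    (hno : ∀ L : Loop S D, IsLoop A L → (∀ t, L.vtx t ≠ sj) → 0 ≤ loopCost CM p A L)
    (z : ℤ) :
    IsLeast { z : ℤ | ∃ (m : ℕ) (τ : Fin (m + 1) → S),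
        Function.Injective τ ∧ (∀ t, τ t ≠ sj) ∧
        gammaMin CM A sj (τ 0)
          + (∑ t : Fin m, gammaMin CM A (τ t.castSucc) (τ t.succ))
          + min (gammaMin CM A (τ (Fin.last m)) sj)
              ((wpen p A (τ (Fin.last m)) sj : ℤ) : WithTop ℤ)
          = (z : WithTop ℤ) } z ↔
    IsLeast { z : ℤ | ∃ L : Loop S D, IsLoop A L ∧
        (((∀ t, L.dem t ≠ none) ∧ (∃ t, L.vtx t = sj)) ∨
         (∃ t, L.dem t = none ∧ L.vtx (cnext t) = sj)) ∧
        loopCost CM p A L = z } z := by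
  constructor
  · rintro ⟨⟨m, τ, hinj, hne, hsum⟩, hlb⟩
    obtain ⟨L, h1, h2, h3⟩ := pathToLoop CM p A sj z m τ hinj hne hsum
    refine ⟨⟨L, h1, h2, h3⟩, ?_⟩
    rintro y ⟨L', hL', hb', rfl⟩
    obtain ⟨z'', hle, hmem⟩ := loopToPath CM p A sj L' hL' hb'
    exact le_trans (hlb hmem) hle
  · rintro ⟨⟨L, hL, hb, hcostz⟩, hlb⟩
    obtain ⟨z'', hle, m, τ, hinj, hne, hsum⟩ := loopToPath CM p A sj L hL hb
    rw [hcostz] at hle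
    obtain ⟨L', h1, h2, h3⟩ := pathToLoop CM p A sj z'' m τ hinj hne hsum
    have hz : z ≤ z'' := hlb ⟨L', h1, h2, h3⟩
    obtain rfl : z'' = z := le_antisymm hle hz
    refine ⟨⟨m, τ, hinj, hne, hsum⟩, ?_⟩
    rintro y ⟨m', τ', hinj', hne', hsum'⟩
    obtain ⟨L'', g1, g2, g3⟩ := pathToLoop CM p A sj y m' τ' hinj' hne' hsum'
    exact hlb ⟨L'', g1, g2, g3⟩
end
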